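/- For q, r > 0, a ∈ ℝ, b ≠ 0, any solution P of the discrete algebraic Riccati equation P = a²P + q - (abP)²/(r + b²P) with P ≥ 0 satisfies P ≥ q > 0, and the closed-loop gain satisfies (a - bL)² < 1 where L = abP/(r + b²P), i.e., |a - bL| < 1. -/

import Mathlib

/-!
Clearing the denominator `D = r + b²P` turns the Riccati equation into `P = q + (a²r/D)·P`.
Hence `P ≥ q`, and since `q > 0` the coefficient `a²r/D` is `< 1`. The closed-loop gain
simplifies to `a - bL = ar/D`, so `(a - bL)² = (a²r/D)·(r/D) < 1` because `r ≤ D`.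
-/

theorem lt_one_of_eq_add_mul {q c P : ℝ} (hq : 0 < q) (hP : 0 ≤ P) (h : P = q + c * P) :
    c < 1 := by
  by_contra! hc
  nlinarith

theorem sq_mul_div_lt_one {a r D : ℝ} (hr : 0 ≤ r) (hrD : r ≤ D) (h : a ^ 2 * r / D < 1) :
    (a * r / D) ^ 2 < 1 := by
  rcases hr.eq_or_lt with rfl | hr
  · simp
  have hD : 0 < D := hr.trans_le hrD
  calc (a * r / D) ^ 2 = a ^ 2 * r / D * (r / D) := by ring
    _ < 1 := mul_lt_one_of_nonneg_of_lt_one_left (by positivity) h ((div_le_one hD).mpr hrD)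

namespace Riccati

variable {q r a b P : ℝ}

theorem closedLoop_eq (hD : r + b ^ 2 * P ≠ 0) :
    a - b * (a * b * P / (r + b ^ 2 * P)) = a * r / (r + b ^ 2 * P) := by
  field_simp
  ring

theorem eq_add_mul_of_riccati (hD : r + b ^ 2 * P ≠ 0)
    (hRic : P = a ^ 2 * P + q - (a * b * P) ^ 2 / (r + b ^ 2 * P)) :
    P = q + a ^ 2 * r / (r + b ^ 2 * P) * P := by
  have hgain : a ^ 2 * P - (a * b * P) ^ 2 / (r + b ^ 2 * P) =
      a ^ 2 * r / (r + b ^ 2 * P) * P := by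
    rw [div_mul_eq_mul_div, eq_div_iff hD, sub_mul, div_mul_cancel₀ _ hD]
    ring
  linarith

end Riccati

theorem riccati_stability_general (q r a b P : ℝ) (hq : 0 < q) (hr : 0 < r)
    (hP : 0 ≤ P)
    (hRic : P = a ^ 2 * P + q - (a * b * P) ^ 2 / (r + b ^ 2 * P)) :
    q ≤ P ∧ 0 < q ∧
      (a - b * (a * b * P / (r + b ^ 2 * P))) ^ 2 < 1 ∧
      |a - b * (a * b * P / (r + b ^ 2 * P))| < 1 := by
  have hD : 0 < r + b ^ 2 * P := by positivity
  have hfix := Riccati.eq_add_mul_of_riccati hD.ne' hRic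
  have hqP : q ≤ P := hfix ▸ le_add_of_nonneg_right (by positivity)
  have hcoeff := lt_one_of_eq_add_mul hq hP hfix
  have hsq : (a - b * (a * b * P / (r + b ^ 2 * P))) ^ 2 < 1 := by
    rw [Riccati.closedLoop_eq hD.ne']
    exact sq_mul_div_lt_one hr.le (le_add_of_nonneg_right (by positivity)) hcoeff
  exact ⟨hqP, hq, hsq, (sq_lt_one_iff_abs_lt_one _).mp hsq⟩

/-- Any nonnegative solution of the discrete algebraic Riccati equation satisfies
`P ≥ q > 0`, and the closed-loop gain `a - bL` with `L = abP/(r + b²P)` satisfies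
`(a - bL)² < 1`, i.e. `|a - bL| < 1`. -/
theorem riccati_stability (q r a b P : ℝ) (hq : 0 < q) (hr : 0 < r) (hb : b ≠ 0)
    (hP : 0 ≤ P)
    (hRic : P = a ^ 2 * P + q - (a * b * P) ^ 2 / (r + b ^ 2 * P)) :
    q ≤ P ∧ 0 < q ∧
      (a - b * (a * b * P / (r + b ^ 2 * P))) ^ 2 < 1 ∧
      |a - b * (a * b * P / (r + b ^ 2 * P))| < 1 :=
  riccati_stability_general q r a b P hq hr hP hRic
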